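/- Let rho_1 : D_8 -> D_8 be the map negating the first coordinate. There is no automorphism w of E_8 such that w restricted to D_8 equals rho_1 (composed with the inclusion D_8 ⊆ E_8). -/
import Mathlib


open Matrix

/-- The root lattice `D_8` (as a set): integer vectors with even coordinate sum. -/
def D8set : Set (Fin 8 → ℝ) :=
  {v | (∀ i, ∃ z : ℤ, v i = (z : ℝ)) ∧ ∃ k : ℤ, ∑ i, v i = 2 * (k : ℝ)}

/-- The all-ones vector `j` in `ℝ^8`. -/
def jv : Fin 8 → ℝ := fun _ => 1

/-- The root lattice `E_8` (as a set): `E_8 = D_8 ∪ (j/2 + D_8)`. -/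
def E8set : Set (Fin 8 → ℝ) :=
  D8set ∪ {v | ∃ w ∈ D8set, v = (2 : ℝ)⁻¹ • jv + w}

/-- The copy of `A_7` inside `E_8` (as a set): integer vectors with coordinate sum `0`. -/
def A7set : Set (Fin 8 → ℝ) :=
  {v | (∀ i, ∃ z : ℤ, v i = (z : ℝ)) ∧ ∑ i, v i = 0}

/-- The map negating the first coordinate. -/
def rho1 (v : Fin 8 → ℝ) : Fin 8 → ℝ := fun i => if i = 0 then -v i else v i


/-- There is no automorphism `w` of `E_8` (a linear bijection preserving the inner
product with `w(E_8) = E_8`) whose restriction to `D_8` is `ρ_1`, the map negating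
the first coordinate. -/
theorem stmt13 :
    ¬ ∃ f : (Fin 8 → ℝ) ≃ₗ[ℝ] (Fin 8 → ℝ),
        (∀ x y, f x ⬝ᵥ f y = x ⬝ᵥ y) ∧ f '' E8set = E8set ∧
        ∀ v ∈ D8set, f v = rho1 v := by
  rintro ⟨f, -, himg, hres⟩
  have hj : jv ∈ D8set := by
    refine ⟨fun i => ⟨1, by simp [jv]⟩, 4, ?_⟩
    simp [jv, Fin.sum_univ_eight]
    norm_num
  have h0 : (0 : Fin 8 → ℝ) ∈ D8set := ⟨fun i => ⟨0, by simp⟩, 0, by simp⟩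
  have hhalf : (2 : ℝ)⁻¹ • jv ∈ E8set := Or.inr ⟨0, h0, by simp⟩
  have hfj : f jv = rho1 jv := hres jv hj
  have hfhalf : f ((2 : ℝ)⁻¹ • jv) = (2 : ℝ)⁻¹ • rho1 jv := by
    rw [_root_.map_smul, hfj]
  have hmem : (2 : ℝ)⁻¹ • rho1 jv ∈ E8set := by
    rw [← hfhalf, ← himg]
    exact ⟨_, hhalf, rfl⟩
  set u : Fin 8 → ℝ := (2 : ℝ)⁻¹ • rho1 jv with hu
  have hu0 : u 0 = -(2 : ℝ)⁻¹ := by simp [hu, rho1, jv]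
  rcases hmem with h | ⟨w, hw, hweq⟩
  · obtain ⟨z, hz⟩ := h.1 0
    rw [hu0] at hz
    have : (2 : ℝ) * z = -1 := by linarith
    have : (2 * z : ℤ) = -1 := by exact_mod_cast this
    omega
  · obtain ⟨-, k, hk⟩ := hw
    have hwv : ∀ i, w i = u i - (2 : ℝ)⁻¹ := by
      intro i
      have := congrFun hweq i
      simp [jv] at this
      linarith
    have hsum : ∑ i, w i = -1 := by
      simp only [Fin.sum_univ_eight, hwv, hu, rho1, jv, Pi.smul_apply, smul_eq_mul]
      norm_num [show (3:Fin 8) ≠ 0 by decide, show (4:Fin 8) ≠ 0 by decide, show (5:Fin 8) ≠ 0 by decide, show (6:Fin 8) ≠ 0 by decide, show (7:Fin 8) ≠ 0 by decide, Fin.ext_iff]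
    rw [hsum] at hk
    have : (2 * k : ℤ) = -1 := by exact_mod_cast hk.symm
    omega
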